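/- arXiv:1412.0402 — 8 statements merged into one kernel-verified Lean document; each statement's English description precedes it below -/
import Mathlib

section
/- For $\varepsilon \in (0,1)$ and $\mu = 1 - \varepsilon$, the quantity $\nu_* = 1/\mu - \sqrt{1/\mu^2 - 1}$ satisfies $\nu_* < 1 - \sqrt{\varepsilon}$. -/
/-!
Rationalising gives `ν_* = μ / (1 + √(1 - μ²))`. Since `1 - μ² = ε (2 - ε) > ε`, this is less than
`μ / (1 + √ε) = (1 - ε) / (1 + √ε) = 1 - √ε`.
-/

open Real

lemma one_div_sub_sqrt_one_div_sq_sub_one {μ : ℝ} (hμ0 : 0 < μ) (hμ1 : μ ≤ 1) :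
    1 / μ - √(1 / μ ^ 2 - 1) = μ / (1 + √(1 - μ ^ 2)) := by
  have hsq : √(1 - μ ^ 2) ^ 2 = 1 - μ ^ 2 := sq_sqrt (by nlinarith)
  have hpos : 0 < 1 + √(1 - μ ^ 2) := by positivity
  have hsqrt : √(1 / μ ^ 2 - 1) = √(1 - μ ^ 2) / μ := by
    rw [show 1 / μ ^ 2 - 1 = (1 - μ ^ 2) / μ ^ 2 by field_simp, sqrt_div' _ (sq_nonneg μ),
      sqrt_sq hμ0.le]
  rw [hsqrt, div_sub_div_same, div_eq_div_iff hμ0.ne' hpos.ne']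
  linear_combination -hsq

lemma div_one_add_sqrt_eq_one_sub_sqrt {ε : ℝ} (hε : 0 ≤ ε) :
    (1 - ε) / (1 + √ε) = 1 - √ε := by
  rw [div_eq_iff (by positivity)]
  linear_combination sq_sqrt hε

theorem stmt2 (ε : ℝ) (hε : ε ∈ Set.Ioo (0:ℝ) 1) (μ : ℝ) (hμ : μ = 1 - ε) :
    1/μ - Real.sqrt (1/μ^2 - 1) < 1 - Real.sqrt ε := by
  obtain ⟨hε0, hε1⟩ := hε
  subst hμ
  have hgap : √ε < √(1 - (1 - ε) ^ 2) := sqrt_lt_sqrt hε0.le (by nlinarith)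
  calc 1 / (1 - ε) - √(1 / (1 - ε) ^ 2 - 1) = (1 - ε) / (1 + √(1 - (1 - ε) ^ 2)) :=
        one_div_sub_sqrt_one_div_sq_sub_one (by linarith) (by linarith)
    _ < (1 - ε) / (1 + √ε) := by gcongr
    _ = 1 - √ε := div_one_add_sqrt_eq_one_sub_sqrt hε0.le
end

section
/- Let $\beta < 0$ and $\tilde{\lambda} \in \mathbb{R}$ with $(1-\beta)^2\tilde{\lambda}^2 + 4\beta > 0$. Then the roots of $f(z) = z^2 - (1-\beta)\tilde{\lambda}z - \beta$ are real, and the maximum of their absolute values is a monotonically non-decreasing function of $|\tilde{\lambda}|$. -/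
/-!
The discriminant being positive, `z ^ 2 - b z - c` factors over `ℝ` with roots `(b ± s) / 2`,
`s = √(b ^ 2 + 4 c)`, and the larger modulus is `max |b + s| |b - s| / 2 = (|b| + s) / 2`.
For `b = (1 - β) λ̃` this is non-decreasing in `|b| = |1 - β| |λ̃|`, since `s` depends on `b`
only through `b ^ 2`.
-/

lemma abs_sub_eq_add_abs_iff (x y : ℝ) :
    |x - y| = |x| + |y| ↔ 0 ≤ x ∧ y ≤ 0 ∨ x ≤ 0 ∧ 0 ≤ y := by
  rw [sub_eq_add_neg, ← abs_neg y, abs_add_eq_add_abs_iff, neg_nonneg, neg_nonpos]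

lemma max_abs_add_abs_sub (x y : ℝ) : max |x + y| |x - y| = |x| + |y| := by
  refine le_antisymm (max_le (abs_add_le x y) (abs_sub x y)) ?_
  rcases le_total 0 x with hx | hx <;> rcases le_total 0 y with hy | hy
  · exact le_max_of_le_left ((abs_add_eq_add_abs_iff x y).2 (.inl ⟨hx, hy⟩)).ge
  · exact le_max_of_le_right ((abs_sub_eq_add_abs_iff x y).2 (.inl ⟨hx, hy⟩)).ge
  · exact le_max_of_le_right ((abs_sub_eq_add_abs_iff x y).2 (.inr ⟨hx, hy⟩)).ge
  · exact le_max_of_le_left ((abs_add_eq_add_abs_iff x y).2 (.inr ⟨hx, hy⟩)).ge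

section RealQuadratic

variable {b c : ℝ}

lemma sq_sub_mul_sub_eq_zero_iff (hd : 0 ≤ b ^ 2 + 4 * c) (z : ℂ) :
    z ^ 2 - b * z - c = 0 ↔
      z = ((b + √(b ^ 2 + 4 * c)) / 2 : ℝ) ∨ z = ((b - √(b ^ 2 + 4 * c)) / 2 : ℝ) := by
  have hs : ((√(b ^ 2 + 4 * c) : ℝ) : ℂ) ^ 2 = (b : ℂ) ^ 2 + 4 * c := by
    exact_mod_cast Real.sq_sqrt hd
  have hfac : z ^ 2 - b * z - c = (z - ((b + √(b ^ 2 + 4 * c)) / 2 : ℝ)) *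
      (z - ((b - √(b ^ 2 + 4 * c)) / 2 : ℝ)) := by
    push_cast
    linear_combination (1 / 4 : ℂ) * hs
  rw [hfac, mul_eq_zero, sub_eq_zero, sub_eq_zero]

lemma im_eq_zero_of_sq_sub_mul_sub_eq_zero (hd : 0 ≤ b ^ 2 + 4 * c) {z : ℂ}
    (hz : z ^ 2 - b * z - c = 0) : z.im = 0 := by
  rcases (sq_sub_mul_sub_eq_zero_iff hd z).1 hz with rfl | rfl <;> exact Complex.ofReal_im _

lemma sSup_norm_roots_sq_sub_mul_sub (hd : 0 ≤ b ^ 2 + 4 * c) :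
    sSup {r : ℝ | ∃ z : ℂ, z ^ 2 - b * z - c = 0 ∧ r = ‖z‖} = (|b| + √(b ^ 2 + 4 * c)) / 2 := by
  have hset : {r : ℝ | ∃ z : ℂ, z ^ 2 - b * z - c = 0 ∧ r = ‖z‖} =
      {|(b + √(b ^ 2 + 4 * c)) / 2|, |(b - √(b ^ 2 + 4 * c)) / 2|} := by
    ext r
    simp only [Set.mem_ofPred_eq, sq_sub_mul_sub_eq_zero_iff hd, or_and_right, exists_or,
      exists_eq_left, Complex.norm_real, Real.norm_eq_abs, Set.mem_insert_iff,
      Set.mem_singleton_iff]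
  rw [hset, csSup_pair, abs_div, abs_div, abs_two, max_div_div_right zero_le_two,
    max_abs_add_abs_sub, abs_of_nonneg (Real.sqrt_nonneg _)]

end RealQuadratic

lemma abs_add_sqrt_sq_add_le {b₁ b₂ : ℝ} (c : ℝ) (h : |b₁| ≤ |b₂|) :
    |b₁| + √(b₁ ^ 2 + 4 * c) ≤ |b₂| + √(b₂ ^ 2 + 4 * c) := by
  have hsq : b₁ ^ 2 ≤ b₂ ^ 2 := sq_le_sq.2 h
  gcongr

theorem stmt6_general (β : ℝ) (lam₁ lam₂ : ℝ)
    (h₁ : (1 - β)^2 * lam₁^2 + 4 * β > 0)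
    (h₂ : (1 - β)^2 * lam₂^2 + 4 * β > 0)
    (hle : |lam₁| ≤ |lam₂|) :
    (∀ z : ℂ, z^2 - (1 - β) * lam₁ * z - β = 0 → z.im = 0) ∧
    (∀ z : ℂ, z^2 - (1 - β) * lam₂ * z - β = 0 → z.im = 0) ∧
    sSup {r : ℝ | ∃ z : ℂ, z^2 - (1 - β) * lam₁ * z - β = 0 ∧ r = ‖z‖}
      ≤ sSup {r : ℝ | ∃ z : ℂ, z^2 - (1 - β) * lam₂ * z - β = 0 ∧ r = ‖z‖} := by
  have hpoly (lam : ℝ) (z : ℂ) :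
      z ^ 2 - (1 - β) * lam * z - β = z ^ 2 - ((1 - β) * lam : ℝ) * z - β := by
    push_cast; rfl
  have hdisc (lam : ℝ) : (1 - β) ^ 2 * lam ^ 2 + 4 * β = ((1 - β) * lam) ^ 2 + 4 * β := by ring
  simp only [hpoly]
  rw [hdisc] at h₁ h₂
  refine ⟨fun _ ↦ im_eq_zero_of_sq_sub_mul_sub_eq_zero h₁.le,
    fun _ ↦ im_eq_zero_of_sq_sub_mul_sub_eq_zero h₂.le, ?_⟩
  rw [sSup_norm_roots_sq_sub_mul_sub h₁.le, sSup_norm_roots_sq_sub_mul_sub h₂.le]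
  have hb : |(1 - β) * lam₁| ≤ |(1 - β) * lam₂| := by
    rw [abs_mul, abs_mul]
    exact mul_le_mul_of_nonneg_left hle (abs_nonneg _)
  gcongr ?_ / 2
  exact abs_add_sqrt_sq_add_le β hb

theorem stmt6 (β : ℝ) (hβ : β < 0) (lam₁ lam₂ : ℝ)
    (h₁ : (1 - β)^2 * lam₁^2 + 4 * β > 0)
    (h₂ : (1 - β)^2 * lam₂^2 + 4 * β > 0)
    (hle : |lam₁| ≤ |lam₂|) :
    (∀ z : ℂ, z^2 - (1 - β) * lam₁ * z - β = 0 → z.im = 0) ∧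
    (∀ z : ℂ, z^2 - (1 - β) * lam₂ * z - β = 0 → z.im = 0) ∧
    sSup {r : ℝ | ∃ z : ℂ, z^2 - (1 - β) * lam₁ * z - β = 0 ∧ r = ‖z‖}
      ≤ sSup {r : ℝ | ∃ z : ℂ, z^2 - (1 - β) * lam₂ * z - β = 0 ∧ r = ‖z‖} :=
  stmt6_general β lam₁ lam₂ h₁ h₂ hle
end

section
/- For any $\beta \in \mathbb{R}$ and $\tilde{\lambda} \in \mathbb{R}$, the maximum of the moduli of the two complex roots of $z^2 - (1-\beta)\tilde{\lambda} z - \beta$ is a monotonically non-decreasing function of $|\tilde{\lambda}|$. -/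
/-!
The roots of `z² - c z - β` are `(c ± s) / 2` with `s² = c² + 4β`. When the discriminant is
nonnegative they are real and the larger modulus is `(|c| + √(c² + 4β)) / 2`; otherwise they are
complex conjugates of common modulus `√(-β)`. Both expressions are nondecreasing in `|c|`, and when
`|c|` grows past the point where the discriminant vanishes, `√(-β) ≤ |c| / 2`. Apply this with
`c = (1 - β) λ̃`.
-/

open Complex

theorem max_abs_add_abs_sub_s7 {α : Type*} [AddCommGroup α] [LinearOrder α] [IsOrderedAddMonoid α]
    (a b : α) : max |a + b| |a - b| = |a| + |b| := by
  refine le_antisymm (max_le (abs_add_le a b) (abs_sub a b)) ?_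
  rcases abs_cases a with ⟨ha, -⟩ | ⟨ha, -⟩ <;> rcases abs_cases b with ⟨hb, -⟩ | ⟨hb, -⟩ <;>
    rw [ha, hb]
  · exact le_max_of_le_left (le_abs_self _)
  · exact le_max_of_le_right (by simpa [sub_eq_add_neg] using le_abs_self (a - b))
  · exact le_max_of_le_right (by simpa [add_comm] using neg_le_abs (a - b))
  · exact le_max_of_le_left (by simpa [add_comm] using neg_le_abs (a + b))

noncomputable def complexSqrt (d : ℝ) : ℂ :=
  if 0 ≤ d then (√d : ℂ) else √(-d) * I

theorem complexSqrt_mul_self (d : ℝ) : complexSqrt d * complexSqrt d = d := by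
  unfold complexSqrt
  split_ifs with hd
  · rw [← ofReal_mul, Real.mul_self_sqrt hd]
  · have hd' : (√(-d) : ℂ) * √(-d) = -d := by
      rw [← ofReal_mul, Real.mul_self_sqrt (by linarith), ofReal_neg]
    linear_combination (I * I) * hd' - d * I_mul_I

theorem quadratic_eq_zero_iff_of_real (β c : ℝ) (z : ℂ) :
    z ^ 2 - c * z - β = 0 ↔
      z = (c + complexSqrt (c ^ 2 + 4 * β)) / 2 ∨ z = (c - complexSqrt (c ^ 2 + 4 * β)) / 2 := by
  have hdiscrim : discrim (1 : ℂ) (-c) (-β) =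
      complexSqrt (c ^ 2 + 4 * β) * complexSqrt (c ^ 2 + 4 * β) := by
    rw [complexSqrt_mul_self, discrim]; push_cast; ring
  have h := quadratic_eq_zero_iff one_ne_zero hdiscrim z
  simp only [neg_neg, mul_one, one_mul] at h
  rw [← h]
  constructor <;> intro hz <;> linear_combination hz

theorem rootNorms_eq_pair (β c : ℝ) :
    {r : ℝ | ∃ z : ℂ, z ^ 2 - c * z - β = 0 ∧ r = ‖z‖} =
      {‖(c + complexSqrt (c ^ 2 + 4 * β)) / 2‖, ‖(c - complexSqrt (c ^ 2 + 4 * β)) / 2‖} := by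
  ext r
  simp only [Set.mem_ofPred_eq, Set.mem_insert_iff, Set.mem_singleton_iff,
    quadratic_eq_zero_iff_of_real]
  constructor
  · rintro ⟨z, rfl | rfl, rfl⟩
    exacts [Or.inl rfl, Or.inr rfl]
  · rintro (rfl | rfl)
    exacts [⟨_, Or.inl rfl, rfl⟩, ⟨_, Or.inr rfl, rfl⟩]

noncomputable def maxRootNorm (β c : ℝ) : ℝ :=
  if 0 ≤ c ^ 2 + 4 * β then (|c| + √(c ^ 2 + 4 * β)) / 2 else √(-β)

theorem max_norm_roots_of_discrim_nonneg {β c : ℝ} (hd : 0 ≤ c ^ 2 + 4 * β) :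
    max ‖(c + complexSqrt (c ^ 2 + 4 * β)) / 2‖ ‖(c - complexSqrt (c ^ 2 + 4 * β)) / 2‖ =
      (|c| + √(c ^ 2 + 4 * β)) / 2 := by
  set s := √(c ^ 2 + 4 * β)
  have hroot : ∀ t : ℝ, ‖((c : ℂ) + t) / 2‖ = |c + t| / 2 := fun t => by
    rw [← ofReal_add, ← ofReal_ofNat, ← ofReal_div, norm_real, Real.norm_eq_abs, abs_div,
      abs_two]
  have hsub : ((c : ℂ) - s) / 2 = ((c : ℂ) + ((-s : ℝ) : ℂ)) / 2 := by push_cast; ring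
  rw [complexSqrt, if_pos hd, hsub, hroot, hroot, ← sub_eq_add_neg,
    max_div_div_right zero_le_two, max_abs_add_abs_sub_s7, abs_of_nonneg (Real.sqrt_nonneg _)]

theorem norm_roots_of_discrim_neg {β c : ℝ} (hd : c ^ 2 + 4 * β < 0) (ε : ℝ) (hε : ε ^ 2 = 1) :
    ‖(c + ε * complexSqrt (c ^ 2 + 4 * β)) / 2‖ = √(-β) := by
  set t := √(-(c ^ 2 + 4 * β))
  have ht : t ^ 2 = -(c ^ 2 + 4 * β) := Real.sq_sqrt (by linarith)
  have hroot : ((c : ℂ) + ε * (t * I)) / 2 = ((c / 2 : ℝ) : ℂ) + ((ε * t / 2 : ℝ) : ℂ) * I := by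
    push_cast; ring
  rw [complexSqrt, if_neg hd.not_ge, hroot, norm_add_mul_I]
  congr 1
  linear_combination ht / 4 + t ^ 2 / 4 * hε

theorem max_norm_roots_eq_maxRootNorm (β c : ℝ) :
    max ‖(c + complexSqrt (c ^ 2 + 4 * β)) / 2‖ ‖(c - complexSqrt (c ^ 2 + 4 * β)) / 2‖ =
      maxRootNorm β c := by
  rw [maxRootNorm]
  split_ifs with hd
  · exact max_norm_roots_of_discrim_nonneg hd
  · have hplus := norm_roots_of_discrim_neg (not_le.mp hd) 1 (one_pow 2)
    have hminus := norm_roots_of_discrim_neg (not_le.mp hd) (-1) (by norm_num)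
    simp only [ofReal_one, one_mul, ofReal_neg, neg_one_mul, ← sub_eq_add_neg] at hplus hminus
    rw [hplus, hminus, max_self]

theorem sSup_rootNorms (β c : ℝ) :
    sSup {r : ℝ | ∃ z : ℂ, z ^ 2 - c * z - β = 0 ∧ r = ‖z‖} = maxRootNorm β c := by
  rw [rootNorms_eq_pair, csSup_pair, max_norm_roots_eq_maxRootNorm]

theorem maxRootNorm_le_of_abs_le (β : ℝ) {c₁ c₂ : ℝ} (h : |c₁| ≤ |c₂|) :
    maxRootNorm β c₁ ≤ maxRootNorm β c₂ := by
  have hsq : c₁ ^ 2 ≤ c₂ ^ 2 := sq_le_sq.mpr h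
  unfold maxRootNorm
  split_ifs with h₁ h₂ h₂
  · gcongr
  · linarith
  · have hβ : √(-β) ≤ |c₂| / 2 :=
      Real.sqrt_le_iff.mpr ⟨by positivity, by rw [div_pow, sq_abs]; linarith⟩
    have : 0 ≤ √(c₂ ^ 2 + 4 * β) := Real.sqrt_nonneg _
    linarith
  · exact le_rfl

theorem stmt7 (β : ℝ) (lam₁ lam₂ : ℝ) (hle : |lam₁| ≤ |lam₂|) :
    sSup {r : ℝ | ∃ z : ℂ, z^2 - (1 - β) * lam₁ * z - β = 0 ∧ r = ‖z‖}
      ≤ sSup {r : ℝ | ∃ z : ℂ, z^2 - (1 - β) * lam₂ * z - β = 0 ∧ r = ‖z‖} := by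
  have hcoeff : ∀ lam : ℝ, (1 - β : ℂ) * lam = ((1 - β) * lam : ℝ) := fun lam => by push_cast; rfl
  rw [hcoeff, hcoeff, sSup_rootNorms, sSup_rootNorms]
  apply maxRootNorm_le_of_abs_le
  rw [abs_mul, abs_mul]
  exact mul_le_mul_of_nonneg_left hle (abs_nonneg _)
end

section
/- Let $\mu \in (0,1)$, $\beta_* = -(1/\mu - \sqrt{1/\mu^2-1})^2$, and $\nu_* = \sqrt{-\beta_*}$. Then for every $\tilde{\lambda} \in [-\mu,\mu]$, all complex roots of $z^2 - (1-\beta_*)\tilde{\lambda}z - \beta_*$ have modulus exactly $\nu_*$. -/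
/-!
Write `β_* = -t²` with `t = 1/μ - √(1/μ² - 1)`. This `t` is a root of `μ t² - 2t + μ`, i.e.
`μ (1 + t²) = 2t`, so the discriminant `(1 + t²)² λ² - 4t²` of the quadratic vanishes at `λ = ±μ`
and is nonpositive on `[-μ, μ]`. A real monic quadratic with nonpositive discriminant has complex
roots that are conjugate (or a double real root), so each has squared modulus equal to the
constant term `t² = -β_*`.
-/

open Complex

theorem Complex.norm_eq_sqrt_of_sq_add_mul_add_eq_zero {b c : ℝ} (hdisc : b ^ 2 ≤ 4 * c)
    {z : ℂ} (hz : z ^ 2 + b * z + c = 0) : ‖z‖ = √c := by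
  have hre : z.re ^ 2 - z.im ^ 2 + b * z.re + c = 0 := by
    simpa [sq] using congrArg re hz
  have him : z.im * (2 * z.re + b) = 0 := by
    have := congrArg im hz
    simp only [sq, add_im, mul_im, ofReal_re, ofReal_im, zero_im] at this
    linear_combination this
  have hvertex : 2 * z.re + b = 0 := by
    rcases mul_eq_zero.mp him with hy | hx
    · have hsq : (2 * z.re + b) ^ 2 = b ^ 2 - 4 * c := by
        linear_combination 4 * hre + 4 * z.im * hy
      exact pow_eq_zero_iff two_ne_zero |>.mp (le_antisymm (by linarith) (sq_nonneg _))
    · exact hx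
  rw [norm_def, normSq_apply]
  congr 1
  linear_combination -hre + z.re * hvertex

theorem mul_one_add_sq_inv_sub_sqrt {μ : ℝ} (hμ0 : 0 < μ) (hμ1 : μ ≤ 1) :
    μ * (1 + (1 / μ - √(1 / μ ^ 2 - 1)) ^ 2) = 2 * (1 / μ - √(1 / μ ^ 2 - 1)) := by
  have hs : √(1 / μ ^ 2 - 1) ^ 2 = 1 / μ ^ 2 - 1 := by
    refine Real.sq_sqrt (sub_nonneg.mpr ?_)
    rw [le_div_iff₀ (by positivity)]
    nlinarith
  generalize √(1 / μ ^ 2 - 1) = s at hs ⊢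
  field_simp at hs ⊢
  linear_combination hs

theorem stmt9 (μ : ℝ) (hμ : μ ∈ Set.Ioo (0:ℝ) 1)
    (β : ℝ) (hβ : β = -(1/μ - Real.sqrt (1/μ^2 - 1))^2)
    (ν : ℝ) (hν : ν = Real.sqrt (-β)) :
    ∀ lam ∈ Set.Icc (-μ) μ, ∀ z : ℂ,
      z^2 - (1 - β) * lam * z - β = 0 → ‖z‖ = ν := by
  rintro lam ⟨hlam_lo, hlam_hi⟩ z hz
  set t := 1 / μ - √(1 / μ ^ 2 - 1)
  have hkey : μ * (1 + t ^ 2) = 2 * t := mul_one_add_sq_inv_sub_sqrt hμ.1 hμ.2.le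
  have hdisc : (-((1 - β) * lam)) ^ 2 ≤ 4 * -β := by
    have hlam : lam ^ 2 ≤ μ ^ 2 := sq_le_sq' hlam_lo hlam_hi
    calc (-((1 - β) * lam)) ^ 2 = (1 + t ^ 2) ^ 2 * lam ^ 2 := by rw [hβ]; ring
      _ ≤ (1 + t ^ 2) ^ 2 * μ ^ 2 := by gcongr
      _ = 4 * -β := by rw [hβ]; linear_combination (μ * (1 + t ^ 2) + 2 * t) * hkey
  rw [hν]
  exact norm_eq_sqrt_of_sq_add_mul_add_eq_zero hdisc (by push_cast; linear_combination hz)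
end

section
/- Let $\mu \in (0,1)$ and $\nu_* = 1/\mu - \sqrt{1/\mu^2-1}$. For any real $\beta$, there exists $\tilde{\lambda} \in \{-\mu,\mu\}$ such that some complex root of $z^2 - (1-\beta)\tilde{\lambda}z - \beta$ has modulus at least $\nu_*$. -/
/-!
We always take `lam = μ`. The number `ν` is the root in `[0, 1]` of `μ (ν² + 1) = 2ν`. If
`|β| ≥ ν²`, the two complex roots have product of modulus `|β|`, so one of them has modulus
`≥ ν`. Otherwise `β > -ν²`, and `(1 + ν²) (ν² - (1 - β) μ ν - β) = (ν² - 1) (ν² + β) ≤ 0`,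
so the real quadratic has a real root `≥ ν`.
-/

open Polynomial in
theorem exists_root_norm_sq_ge {K : Type*} [NormedField K] [IsAlgClosed K] (s p : K) :
    ∃ z : K, z ^ 2 - s * z + p = 0 ∧ ‖p‖ ≤ ‖z‖ ^ 2 := by
  obtain ⟨z, hz⟩ := IsAlgClosed.exists_root (C 1 * X ^ 2 + C (-s) * X + C p)
    (by rw [degree_quadratic one_ne_zero]; decide)
  have hz : z ^ 2 - s * z + p = 0 := by
    simpa [sub_eq_add_neg] using hz
  have hz_other : (s - z) ^ 2 - s * (s - z) + p = 0 := by linear_combination hz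
  have hprod : ‖p‖ = ‖z‖ * ‖s - z‖ := by
    rw [← norm_mul]; congr 1; linear_combination hz
  rcases le_total ‖z‖ ‖s - z‖ with h | h
  · exact ⟨s - z, hz_other, by rw [hprod, sq]; gcongr⟩
  · exact ⟨z, hz, by rw [hprod, sq]; gcongr⟩

theorem exists_root_ge_of_eval_nonpos {s p x : ℝ} (h : x ^ 2 - s * x + p ≤ 0) :
    ∃ r : ℝ, r ^ 2 - s * r + p = 0 ∧ x ≤ r := by
  have hdisc : (x - s / 2) ^ 2 ≤ s ^ 2 / 4 - p := by linarith
  have hsqrt := Real.sq_sqrt ((sq_nonneg _).trans hdisc)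
  refine ⟨s / 2 + √(s ^ 2 / 4 - p), by linear_combination hsqrt, ?_⟩
  linarith [le_abs_self (x - s / 2), Real.abs_le_sqrt hdisc]

theorem sq_le_one_and_mul_sq_add_one_eq {μ ν : ℝ} (hμ0 : 0 < μ) (hμ1 : μ ≤ 1)
    (hν : ν = 1 / μ - √(1 / μ ^ 2 - 1)) : ν ^ 2 ≤ 1 ∧ μ * (ν ^ 2 + 1) = 2 * ν := by
  obtain ⟨u, hu⟩ : ∃ u, u = 1 / μ := ⟨_, rfl⟩
  have huμ : u * μ = 1 := by rw [hu]; field_simp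
  have hu1 : 1 ≤ u := by rw [hu, le_div_iff₀ hμ0]; linarith
  have hs : √(u ^ 2 - 1) ^ 2 = u ^ 2 - 1 := Real.sq_sqrt (by nlinarith)
  have hs0 : 0 ≤ √(u ^ 2 - 1) := Real.sqrt_nonneg _
  rw [show 1 / μ ^ 2 = u ^ 2 by rw [hu]; ring, ← hu] at hν
  subst hν
  constructor
  · nlinarith
  · linear_combination μ * hs + (2 * u - 2 * √(u ^ 2 - 1)) * huμ

theorem stmt11 (μ : ℝ) (hμ : μ ∈ Set.Ioo (0:ℝ) 1)
    (ν : ℝ) (hν : ν = 1/μ - Real.sqrt (1/μ^2 - 1)) (β : ℝ) :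
    ∃ lam ∈ ({-μ, μ} : Set ℝ), ∃ z : ℂ,
      z^2 - (1 - β) * lam * z - β = 0 ∧ ν ≤ ‖z‖ := by
  obtain ⟨hν1, hμν⟩ := sq_le_one_and_mul_sq_add_one_eq hμ.1 hμ.2.le hν
  refine ⟨μ, by simp, ?_⟩
  by_cases hβ : ν ^ 2 ≤ |β|
  · obtain ⟨z, hz, hnorm⟩ := exists_root_norm_sq_ge (((1 - β) * μ : ℝ) : ℂ) ((-β : ℝ) : ℂ)
    refine ⟨z, by push_cast at hz; linear_combination hz, ?_⟩
    rw [Complex.norm_real, Real.norm_eq_abs, abs_neg] at hnorm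
    exact (abs_le_of_sq_le_sq' (hβ.trans hnorm) (norm_nonneg z)).2
  · have hval : (1 + ν ^ 2) * (ν ^ 2 - (1 - β) * μ * ν + -β) = (ν ^ 2 - 1) * (ν ^ 2 + β) := by
      linear_combination (β - 1) * ν * hμν
    have hneg : ν ^ 2 - (1 - β) * μ * ν + -β ≤ 0 := by
      nlinarith [neg_abs_le β, sq_nonneg ν]
    obtain ⟨r, hr, hνr⟩ := exists_root_ge_of_eval_nonpos hneg
    refine ⟨r, by exact_mod_cast (by linear_combination hr : r ^ 2 - (1 - β) * μ * r - β = 0), ?_⟩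
    rw [Complex.norm_real, Real.norm_eq_abs]
    exact hνr.trans (le_abs_self r)
end

section
/- Let $\mu \in (0,1)$, $\beta_* = -(1/\mu-\sqrt{1/\mu^2-1})^2$, $\nu_* = \sqrt{-\beta_*}$. Then there is a continuous bijection $\tilde{\lambda} \mapsto \theta_{\tilde{\lambda}}$ from $[-\mu,\mu]$ to $[0,\pi]$ such that $z^2 - (1-\beta_*)\tilde{\lambda}z - \beta_* = (z - \nu_* e^{i\theta_{\tilde{\lambda}}})(z - \nu_* e^{-i\theta_{\tilde{\lambda}}})$ for all $\tilde{\lambda} \in [-\mu,\mu]$ (orientation-reversing: $\theta_\mu = 0$, $\theta_{-\mu} = \pi$). -/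
/-!
The optimal parameter `a = 1/μ - √(1/μ² - 1)` is the smaller root of `μ a² - 2a + μ = 0`, so
`β = -a²`, `ν = a` and `(1 - β) λ = (1 + a²) λ = 2a · (λ/μ)`. Hence the quadratic is
`z² - 2ν cos θ z + ν²` with `θ = arccos (λ/μ)`, whose roots are `ν e^{± iθ}`; and
`λ ↦ arccos (λ/μ)` maps `[-μ, μ]` homeomorphically and decreasingly onto `[0, π]`.
-/

open Set Real

theorem Real.bijOn_arccos : BijOn arccos (Icc (-1) 1) (Icc 0 π) :=
  arccos_image_Icc ▸ arccos_injOn.bijOn_image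

theorem bijOn_div_Icc_neg_self {c : ℝ} (hc : 0 < c) :
    BijOn (· / c) (Icc (-c) c) (Icc (-1) 1) := by
  have h : BijOn (· * c⁻¹) (Icc (-c) c) (Icc (-c * c⁻¹) (c * c⁻¹)) :=
    image_mul_right_Icc' (-c) c (inv_pos.mpr hc) ▸
      (mul_left_injective₀ (inv_ne_zero hc.ne')).injOn.bijOn_image
  simpa only [div_eq_mul_inv, neg_mul, mul_inv_cancel₀ hc.ne'] using h

theorem Complex.sub_mul_exp_mul_sub_mul_exp_neg (z ν t : ℂ) :
    (z - ν * exp (I * t)) * (z - ν * exp (-I * t)) = z ^ 2 - 2 * ν * cos t * z + ν ^ 2 := by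
  have hsum : exp (I * t) + exp (-I * t) = 2 * cos t := by
    rw [two_cos, mul_comm I, neg_mul, neg_mul, mul_comm t]
  have hprod : exp (I * t) * exp (-I * t) = 1 := by
    rw [← exp_add, neg_mul, add_neg_cancel, exp_zero]
  linear_combination (-ν * z) * hsum + ν ^ 2 * hprod

theorem one_div_sub_sqrt_one_div_sq_sub_one_pos {μ : ℝ} (h0 : 0 < μ) (h1 : μ < 1) :
    0 < 1 / μ - √(1 / μ ^ 2 - 1) := by
  have hμ : 1 < 1 / μ := one_lt_one_div h0 h1
  rw [sub_pos, sqrt_lt' (by linarith), one_div_pow]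
  linarith

theorem mul_sq_sub_two_mul_add_eq_zero_of_eq_one_div_sub_sqrt {μ a : ℝ} (h0 : 0 < μ)
    (h1 : μ ≤ 1) (ha : a = 1 / μ - √(1 / μ ^ 2 - 1)) : μ * a ^ 2 - 2 * a + μ = 0 := by
  have hs : √(1 / μ ^ 2 - 1) ^ 2 = 1 / μ ^ 2 - 1 := by
    refine sq_sqrt (sub_nonneg.mpr ?_)
    rw [le_one_div (by norm_num) (by positivity), div_one]
    nlinarith
  have hμinv : μ * (1 / μ) = 1 := mul_one_div_cancel h0.ne'
  subst ha
  linear_combination μ * hs + (2 / μ - 2 * √(1 / μ ^ 2 - 1)) * hμinv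

open Complex in
theorem stmt12 (μ : ℝ) (hμ : μ ∈ Set.Ioo (0:ℝ) 1)
    (β : ℝ) (hβ : β = -(1/μ - Real.sqrt (1/μ^2 - 1))^2)
    (ν : ℝ) (hν : ν = Real.sqrt (-β)) :
    ∃ θ : ℝ → ℝ,
      ContinuousOn θ (Set.Icc (-μ) μ) ∧
      Set.BijOn θ (Set.Icc (-μ) μ) (Set.Icc 0 Real.pi) ∧
      θ μ = 0 ∧ θ (-μ) = Real.pi ∧
      ∀ lam ∈ Set.Icc (-μ) μ, ∀ z : ℂ,
        z^2 - (1 - β) * lam * z - β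
          = (z - ν * Complex.exp (Complex.I * θ lam))
            * (z - ν * Complex.exp (-Complex.I * θ lam)) := by
  obtain ⟨hμ0, hμ1⟩ := hμ
  have hdiv := bijOn_div_Icc_neg_self hμ0
  have hβν : β = -ν ^ 2 := by rw [hν, sq_sqrt (by rw [hβ, neg_neg]; positivity), neg_neg]
  have hroot : μ * ν ^ 2 - 2 * ν + μ = 0 :=
    mul_sq_sub_two_mul_add_eq_zero_of_eq_one_div_sub_sqrt hμ0 hμ1.le
      (by rw [hν, hβ, neg_neg, sqrt_sq (one_div_sub_sqrt_one_div_sq_sub_one_pos hμ0 hμ1).le])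
  refine ⟨fun lam => arccos (lam / μ), continuous_arccos.comp_continuousOn (by fun_prop),
    bijOn_arccos.comp hdiv, by simp [hμ0.ne'], by simp [hμ0.ne'], fun lam hlam z => ?_⟩
  have hcos : Real.cos (arccos (lam / μ)) = lam / μ :=
    cos_arccos (hdiv.mapsTo hlam).1 (hdiv.mapsTo hlam).2
  have hcoef : (1 - β) * lam = 2 * ν * (lam / μ) := by
    rw [hβν]; field_simp; linear_combination lam * hroot
  have hcoefC : ((1 - β) * lam : ℂ) = 2 * ν * (lam / μ : ℝ) := by exact_mod_cast hcoef
  have hβC : (β : ℂ) = -ν ^ 2 := by exact_mod_cast hβν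
  rw [Complex.sub_mul_exp_mul_sub_mul_exp_neg, ← ofReal_cos, hcos]
  linear_combination (-z) * hcoefC - hβC
end

section
/- Let $M \ge 2$, $\nu \in (0,1)$, and real coefficients $a_0,\dots,a_{M-1}$ with $a_{M-1} < -1$. Then for every $\theta \in [0,\pi]$ the polynomial $\tilde{P}(y) = (y-e^{i\theta})(y-e^{-i\theta})y^{M-2} + (y - 1/\nu)\sum_{k=0}^{M-1} a_k y^k$ has a complex root of modulus strictly greater than $1$. -/
/-!
On the real axis write `r = 1/ν > 1`. At `y = r` the second summand of `P̃` vanishes and the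
first equals `((r - 1)² + 2r(1 - cos θ)) r^(M-2) > 0`, while the coefficient of `y^M` is
`1 + a_{M-1} < 0`, so `P̃(y) → -∞` as `y → +∞`. The intermediate value theorem gives a real root
`y ≥ r > 1`.
-/

open Polynomial Filter

theorem Polynomial.exists_isRoot_ge_of_coeff_neg {p : ℝ[X]} {n : ℕ} (hn : 0 < n)
    (hdeg : p.natDegree ≤ n) (hcoeff : p.coeff n < 0) {r : ℝ} (hr : 0 < p.eval r) :
    ∃ x, r ≤ x ∧ p.IsRoot x := by
  have hnat : p.natDegree = n := le_antisymm hdeg (le_natDegree_of_ne_zero hcoeff.ne)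
  have hp : p ≠ 0 := fun h => hcoeff.ne (by simp [h])
  have hdeg_pos : 0 < p.degree := by
    rw [degree_eq_natDegree hp, hnat]; exact_mod_cast hn
  have hlead : p.leadingCoeff ≤ 0 := by rw [leadingCoeff, hnat]; exact hcoeff.le
  obtain ⟨x, hrx, hx⟩ : ∃ x, r ≤ x ∧ p.eval x < 0 :=
    ((eventually_ge_atTop r).and ((p.tendsto_atBot_of_leadingCoeff_nonpos hdeg_pos hlead).eventually
      (eventually_lt_atBot 0))).exists
  obtain ⟨y, hy, hy0⟩ := intermediate_value_Icc' hrx p.continuous.continuousOn ⟨hx.le, hr.le⟩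
  exact ⟨y, hy.1, hy0⟩

theorem Complex.sub_exp_mul_sub_exp_neg (y θ : ℂ) :
    (y - exp (I * θ)) * (y - exp (-I * θ)) = y ^ 2 - 2 * cos θ * y + 1 := by
  have h : exp (I * θ) * exp (-I * θ) = 1 := by rw [← exp_add]; simp
  rw [cos, show -θ * I = -I * θ by ring, mul_comm θ I]
  linear_combination h

/-- The paper's `P̃` restricted to the real axis, with `c = 2 cos θ` and `r = 1/ν`. -/
noncomputable def pTilde (M : ℕ) (c r : ℝ) (a : ℕ → ℝ) : ℝ[X] :=
  (X ^ 2 - C c * X + 1) * X ^ (M - 2) + (X - C r) * ∑ k ∈ Finset.range M, C (a k) * X ^ k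

section pTilde

variable {M : ℕ} (c r : ℝ) (a : ℕ → ℝ)

theorem natDegree_pTilde_le (hM : 2 ≤ M) : (pTilde M c r a).natDegree ≤ M := by
  have hS : (∑ k ∈ Finset.range M, C (a k) * X ^ k).natDegree ≤ M - 1 :=
    natDegree_sum_le_of_forall_le _ _ fun k hk =>
      (natDegree_C_mul_X_pow_le _ _).trans (by simp at hk; omega)
  refine natDegree_add_le_of_degree_le ?_ ?_
  · exact (natDegree_mul_le_of_le (n := M - 2) (by compute_degree!) (natDegree_X_pow_le _)).trans
      (by omega)
  · exact (natDegree_mul_le_of_le (n := M - 1) (by compute_degree!) hS).trans (by omega)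

theorem coeff_pTilde_self (hM : 2 ≤ M) : (pTilde M c r a).coeff M = 1 + a (M - 1) := by
  obtain ⟨m, rfl⟩ : ∃ m, M = m + 2 := ⟨M - 2, by omega⟩
  have hQ : ((X ^ 2 - C c * X + 1) * X ^ m).coeff (m + 2) = 1 := by
    rw [add_comm m 2, coeff_mul_X_pow]; simp [coeff_one]
  have hS : ((X - C r) * ∑ k ∈ Finset.range (m + 2), C (a k) * X ^ k).coeff (m + 1 + 1) =
      a (m + 1) := by
    simp [coeff_X_sub_C_mul]
  simp only [pTilde, coeff_add, Nat.add_sub_cancel, hQ, hS]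
  rfl

theorem eval_pTilde_self : (pTilde M c r a).eval r = (r ^ 2 - c * r + 1) * r ^ (M - 2) := by
  simp [pTilde]

end pTilde

theorem stmt13 (M : ℕ) (hM : 2 ≤ M) (ν : ℝ) (hν : ν ∈ Set.Ioo (0:ℝ) 1)
    (a : ℕ → ℝ) (ha : a (M - 1) < -1) :
    ∀ θ ∈ Set.Icc (0:ℝ) Real.pi, ∃ y : ℂ,
      (y - Complex.exp (Complex.I * θ)) * (y - Complex.exp (-Complex.I * θ)) * y^(M-2)
        + (y - 1/(ν:ℂ)) * (∑ k ∈ Finset.range M, (a k : ℂ) * y^k) = 0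
      ∧ 1 < ‖y‖ := by
  intro θ _
  have hr : 1 < 1 / ν := one_lt_one_div hν.1 hν.2
  have hpos : 0 < (pTilde M (2 * Real.cos θ) (1 / ν) a).eval (1 / ν) := by
    rw [eval_pTilde_self]
    have := Real.cos_le_one θ
    exact mul_pos (by nlinarith) (pow_pos (by linarith) _)
  obtain ⟨x, hrx, hx⟩ := exists_isRoot_ge_of_coeff_neg (by omega) (natDegree_pTilde_le _ _ a hM)
    (by rw [coeff_pTilde_self _ _ a hM]; linarith) hpos
  refine ⟨x, ?_, ?_⟩
  · rw [Complex.sub_exp_mul_sub_exp_neg, ← Complex.ofReal_cos]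
    simpa [pTilde, eval_finsetSum] using congrArg ((↑) : ℝ → ℂ) hx
  · rw [Complex.norm_real, Real.norm_eq_abs, abs_of_pos (by linarith)]
    linarith
end

section
/- Let $\mu \in (0,1)$ and for $\tilde{\lambda} \in [-\mu,\mu]$ let $\rho(\beta,\tilde{\lambda})$ denote the maximal modulus of the complex roots of $z^2 - (1-\beta)\tilde{\lambda}z - \beta$. Then $\min_{\beta \in \mathbb{R}} \max_{\tilde{\lambda} \in [-\mu,\mu]} \rho(\beta,\tilde{\lambda}) = 1/\mu - \sqrt{1/\mu^2 - 1}$, and the minimum is attained at $\beta = -(1/\mu - \sqrt{1/\mu^2-1})^2$. -/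
/-!
The optimal modulus `ν` is the root in `(0, 1)` of `μ ν² - 2ν + μ = 0`, i.e. `μ (1 + ν²) = 2ν`.

Lower bound (take `λ = μ`): the two roots have product `-β`, so one of them has modulus at least
`√|β|`, which is `≥ ν` when `β ≤ -ν²`. When `β > -ν²`, the identity
`(1 + ν²) p(ν) = (ν² - 1)(ν² + β)` for `p(z) = z² - (1 - β) μ z - β` gives `p(ν) ≤ 0`, so `p` has a
real root `≥ ν`.

Upper bound: at `β₀ = -ν²` the polynomial is `z² - (1 + ν²) λ z + ν²`, whose discriminant is
`≤ 0` for `|λ| ≤ μ`; so its roots are complex conjugate (or a double real root) of modulus `ν`.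
-/

theorem exists_root_ge_of_quadratic_nonpos {a b x : ℝ} (hx : x ^ 2 - a * x - b ≤ 0) :
    ∃ r : ℝ, r ^ 2 - a * r - b = 0 ∧ x ≤ r := by
  have hdisc : (2 * x - a) ^ 2 ≤ a ^ 2 + 4 * b := by linarith
  have hD : 0 ≤ a ^ 2 + 4 * b := (sq_nonneg _).trans hdisc
  refine ⟨(a + √(a ^ 2 + 4 * b)) / 2, ?_, ?_⟩
  · linear_combination (1 / 4 : ℝ) * Real.sq_sqrt hD
  · linarith [le_abs_self (2 * x - a), Real.abs_le_sqrt hdisc]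

theorem exists_root_norm_sq_ge_s18 (a b : ℂ) :
    ∃ z : ℂ, z ^ 2 - a * z - b = 0 ∧ ‖b‖ ≤ ‖z‖ ^ 2 := by
  obtain ⟨s, hs⟩ := IsAlgClosed.exists_eq_mul_self (a ^ 2 + 4 * b)
  have hroot₁ : ((a + s) / 2) ^ 2 - a * ((a + s) / 2) - b = 0 := by linear_combination hs.symm / 4
  have hroot₂ : ((a - s) / 2) ^ 2 - a * ((a - s) / 2) - b = 0 := by linear_combination hs.symm / 4
  have hprod : ‖(a + s) / 2‖ * ‖(a - s) / 2‖ = ‖b‖ := by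
    rw [← norm_mul, ← norm_neg b]
    congr 1
    linear_combination hs / 4
  rcases le_total ‖(a - s) / 2‖ ‖(a + s) / 2‖ with h | h
  · exact ⟨_, hroot₁, by nlinarith [norm_nonneg ((a + s) / 2)]⟩
  · exact ⟨_, hroot₂, by nlinarith [norm_nonneg ((a - s) / 2)]⟩

theorem norm_sq_eq_of_root_of_discrim_nonpos {a q : ℝ} (hdisc : a ^ 2 ≤ 4 * q) {z : ℂ}
    (hz : z ^ 2 - a * z + q = 0) : ‖z‖ ^ 2 = q := by
  have hre : z.re ^ 2 - z.im ^ 2 - a * z.re + q = 0 := by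
    simpa [sq] using congrArg Complex.re hz
  have him : z.im * (2 * z.re - a) = 0 := by
    linear_combination (by simpa [sq] using congrArg Complex.im hz : _ = _)
  rw [Complex.sq_norm, Complex.normSq_apply]
  rcases mul_eq_zero.mp him with hy | hx
  · rw [hy] at hre ⊢
    nlinarith [sq_nonneg (2 * z.re - a)]
  · linear_combination -hre + z.re * hx

theorem optimal_modulus_spec {μ ν : ℝ} (hμ : μ ∈ Set.Ioo (0:ℝ) 1)
    (hν : ν = 1 / μ - √(1 / μ ^ 2 - 1)) : 0 ≤ ν ∧ ν ≤ 1 ∧ μ * (1 + ν ^ 2) = 2 * ν := by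
  obtain ⟨hμ0, hμ1⟩ := hμ
  set s := √(1 / μ ^ 2 - 1)
  have hs0 : 0 ≤ s := Real.sqrt_nonneg _
  have hrad : 0 ≤ 1 / μ ^ 2 - 1 := by
    rw [sub_nonneg, le_div_iff₀ (by positivity)]
    nlinarith
  have hs2 : μ ^ 2 * s ^ 2 = 1 - μ ^ 2 := by
    rw [Real.sq_sqrt hrad]
    field_simp
  have hprod : ν * (1 + μ * s) = μ := by
    rw [hν]; field_simp; linear_combination -hs2
  refine ⟨?_, ?_, ?_⟩
  · nlinarith [mul_nonneg hμ0.le hs0]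
  · nlinarith [mul_nonneg hμ0.le hs0]
  · rw [hν]; field_simp; linear_combination hs2

theorem exists_root_norm_ge {μ ν : ℝ} (hν0 : 0 ≤ ν) (hν1 : ν ≤ 1)
    (hμν : μ * (1 + ν ^ 2) = 2 * ν) (β : ℝ) :
    ∃ z : ℂ, z ^ 2 - (1 - β) * μ * z - β = 0 ∧ ν ≤ ‖z‖ := by
  rcases le_or_gt β (-ν ^ 2) with hβ | hβ
  · obtain ⟨z, hz, hβz⟩ := exists_root_norm_sq_ge_s18 ((1 - β) * μ) β
    refine ⟨z, hz, ?_⟩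
    rw [Complex.norm_real, Real.norm_eq_abs] at hβz
    nlinarith [neg_le_abs β, norm_nonneg z]
  · have hpν : ν ^ 2 - (1 - β) * μ * ν - β ≤ 0 := by
      have hid : (1 + ν ^ 2) * (ν ^ 2 - (1 - β) * μ * ν - β) = (ν ^ 2 - 1) * (ν ^ 2 + β) := by
        linear_combination (-(1 - β) * ν) * hμν
      have : (ν ^ 2 - 1) * (ν ^ 2 + β) ≤ 0 :=
        mul_nonpos_of_nonpos_of_nonneg (by nlinarith) (by linarith)
      nlinarith
    obtain ⟨r, hr, hνr⟩ := exists_root_ge_of_quadratic_nonpos hpν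
    refine ⟨r, by exact_mod_cast congrArg ((↑) : ℝ → ℂ) hr, ?_⟩
    rw [Complex.norm_real, Real.norm_eq_abs]
    exact hνr.trans (le_abs_self r)

theorem norm_root_eq {μ ν lam : ℝ} (hν : 0 ≤ ν) (hμν : μ * (1 + ν ^ 2) = 2 * ν)
    (hlam : |lam| ≤ μ) {z : ℂ} (hz : z ^ 2 - (1 + ν ^ 2) * lam * z + ν ^ 2 = 0) : ‖z‖ = ν := by
  have hdisc : ((1 + ν ^ 2) * lam) ^ 2 ≤ 4 * ν ^ 2 := by
    have : |(1 + ν ^ 2) * lam| ≤ 2 * ν := by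
      rw [abs_mul, abs_of_pos (by positivity), mul_comm, ← hμν]
      exact mul_le_mul_of_nonneg_right hlam (by positivity)
    nlinarith [sq_abs ((1 + ν ^ 2) * lam), abs_nonneg ((1 + ν ^ 2) * lam)]
  have := norm_sq_eq_of_root_of_discrim_nonpos hdisc (by push_cast; exact hz)
  exact (sq_eq_sq₀ (norm_nonneg z) hν).mp this

theorem stmt18 (μ : ℝ) (hμ : μ ∈ Set.Ioo (0:ℝ) 1)
    (ν β₀ : ℝ) (hν : ν = 1/μ - Real.sqrt (1/μ^2 - 1))
    (hβ₀ : β₀ = -(1/μ - Real.sqrt (1/μ^2 - 1))^2) :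
    (∀ β : ℝ, ∃ lam ∈ Set.Icc (-μ) μ, ∃ z : ℂ,
      z^2 - (1 - β) * lam * z - β = 0 ∧ ν ≤ ‖z‖) ∧
    (∀ lam ∈ Set.Icc (-μ) μ, ∀ z : ℂ,
      z^2 - (1 - β₀) * lam * z - β₀ = 0 → ‖z‖ ≤ ν) := by
  obtain ⟨hν0, hν1, hμν⟩ := optimal_modulus_spec hμ hν
  rw [← hν] at hβ₀
  subst hβ₀
  refine ⟨fun β ↦ ⟨μ, ⟨by linarith [hμ.1], le_rfl⟩, exists_root_norm_ge hν0 hν1 hμν β⟩, ?_⟩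
  intro lam hlam z hz
  refine (norm_root_eq hν0 hμν (abs_le.mpr hlam) ?_).le
  push_cast at hz
  linear_combination hz
end
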